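/- arXiv:2007.10672 — 10 statements merged into one kernel-verified Lean document; each statement's English description precedes it below -/
import Mathlib

section
/- Let p_i, p_j, p_k be pairwise distinct points in ℝ³ satisfying the angle constraints (C1)–(C3) with parameters w_ik, w_ki, w_ij, w_ji, w_jk, w_kj obeying the nondegeneracy conditions. If the product w_ik·w_ij·w_jk·w_ki·w_ji·w_kj = 0, then p_i, p_j, p_k are not collinear. -/
open EuclideanGeometry

theorem stmt_0 (p_i p_j p_k : EuclideanSpace ℝ (Fin 3))
    (hij : p_i ≠ p_j) (hik : p_i ≠ p_k) (hjk : p_j ≠ p_k)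
    (w_ik w_ki w_ij w_ji w_jk w_kj : ℝ)
    (hC1 : w_ik * dist p_i p_k * dist p_i p_j * Real.cos (∠ p_j p_i p_k)
          + w_ki * dist p_i p_k * dist p_j p_k * Real.cos (∠ p_i p_k p_j) = 0)
    (hC2 : w_ij * dist p_i p_k * dist p_i p_j * Real.cos (∠ p_j p_i p_k)
          + w_ji * dist p_i p_j * dist p_j p_k * Real.cos (∠ p_i p_j p_k) = 0)
    (hC3 : w_jk * dist p_j p_k * dist p_i p_j * Real.cos (∠ p_i p_j p_k)
          + w_kj * dist p_i p_k * dist p_j p_k * Real.cos (∠ p_i p_k p_j) = 0)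
    (hnd1 : w_ik ^ 2 + w_ki ^ 2 ≠ 0) (hnd2 : w_ij ^ 2 + w_ji ^ 2 ≠ 0)
    (hnd3 : w_jk ^ 2 + w_kj ^ 2 ≠ 0)
    (hprod : w_ik * w_ij * w_jk * w_ki * w_ji * w_kj = 0) :
    ¬ Collinear ℝ ({p_i, p_j, p_k} : Set (EuclideanSpace ℝ (Fin 3))) := by
  intro hcol
  have dij : dist p_i p_j ≠ 0 := dist_ne_zero.2 hij
  have dik : dist p_i p_k ≠ 0 := dist_ne_zero.2 hik
  have djk : dist p_j p_k ≠ 0 := dist_ne_zero.2 hjk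
  have aux : ∀ x d1 d2 c : ℝ, x * d1 * d2 * c = 0 → d1 ≠ 0 → d2 ≠ 0 → c ≠ 0 → x = 0 := by
    intro x d1 d2 c h h1 h2 h3
    by_contra hx
    exact (mul_ne_zero (mul_ne_zero (mul_ne_zero hx h1) h2) h3) h
  have hcos : ∀ a b c : EuclideanSpace ℝ (Fin 3),
      a ≠ b → b ≠ c → Collinear ℝ ({a, b, c} : Set (EuclideanSpace ℝ (Fin 3))) →
      Real.cos (∠ a b c) ≠ 0 := by
    intro a b c hab hbc hc
    rcases collinear_iff_eq_or_eq_or_angle_eq_zero_or_angle_eq_pi.1 hc with h | h | h | h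
    · exact absurd h hab
    · exact absurd h.symm hbc
    · rw [h]; norm_num
    · rw [h]; norm_num
  have c_i : Real.cos (∠ p_j p_i p_k) ≠ 0 := by
    apply hcos _ _ _ (Ne.symm hij) hik
    have : ({p_j, p_i, p_k} : Set (EuclideanSpace ℝ (Fin 3))) = {p_i, p_j, p_k} := by
      ext x; simp [or_comm, or_left_comm]
    rwa [this]
  have c_j : Real.cos (∠ p_i p_j p_k) ≠ 0 := hcos _ _ _ hij hjk hcol
  have c_k : Real.cos (∠ p_i p_k p_j) ≠ 0 := by
    apply hcos _ _ _ hik (Ne.symm hjk)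
    have : ({p_i, p_k, p_j} : Set (EuclideanSpace ℝ (Fin 3))) = {p_i, p_j, p_k} := by
      ext x; simp [or_comm, or_left_comm]
    rwa [this]
  have n_ik : w_ik ≠ 0 := by
    intro h
    have h2 : w_ki * dist p_i p_k * dist p_j p_k * Real.cos (∠ p_i p_k p_j) = 0 := by
      rw [h] at hC1; linarith
    have := aux _ _ _ _ h2 dik djk c_k
    apply hnd1; rw [h, this]; ring
  have n_ki : w_ki ≠ 0 := by
    intro h
    have h2 : w_ik * dist p_i p_k * dist p_i p_j * Real.cos (∠ p_j p_i p_k) = 0 := by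
      rw [h] at hC1; linarith
    have := aux _ _ _ _ h2 dik dij c_i
    apply hnd1; rw [h, this]; ring
  have n_ij : w_ij ≠ 0 := by
    intro h
    have h2 : w_ji * dist p_i p_j * dist p_j p_k * Real.cos (∠ p_i p_j p_k) = 0 := by
      rw [h] at hC2; linarith
    have := aux _ _ _ _ h2 dij djk c_j
    apply hnd2; rw [h, this]; ring
  have n_ji : w_ji ≠ 0 := by
    intro h
    have h2 : w_ij * dist p_i p_k * dist p_i p_j * Real.cos (∠ p_j p_i p_k) = 0 := by
      rw [h] at hC2; linarith
    have := aux _ _ _ _ h2 dik dij c_i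
    apply hnd2; rw [h, this]; ring
  have n_jk : w_jk ≠ 0 := by
    intro h
    have h2 : w_kj * dist p_i p_k * dist p_j p_k * Real.cos (∠ p_i p_k p_j) = 0 := by
      rw [h] at hC3; linarith
    have := aux _ _ _ _ h2 dik djk c_k
    apply hnd3; rw [h, this]; ring
  have n_kj : w_kj ≠ 0 := by
    intro h
    have h2 : w_jk * dist p_j p_k * dist p_i p_j * Real.cos (∠ p_i p_j p_k) = 0 := by
      rw [h] at hC3; linarith
    have := aux _ _ _ _ h2 djk dij c_j
    apply hnd3; rw [h, this]; ring
  exact (mul_ne_zero (mul_ne_zero (mul_ne_zero (mul_ne_zero (mul_ne_zero n_ik n_ij) n_jk) n_ki) n_ji) n_kj) hprod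
end

section
/- Let p_i, p_j, p_k be pairwise distinct points in ℝ³ satisfying the angle constraints (C1)–(C3) with parameters w_ik, w_ki, w_ij, w_ji, w_jk, w_kj, all six of which are nonzero. Then p_i, p_j, p_k are collinear if and only if w_ki/w_ik + w_ji/w_ij = 1, or w_ij/w_ji + w_kj/w_jk = 1, or w_ik/w_ki + w_jk/w_kj = 1. -/
open EuclideanGeometry

set_option maxHeartbeats 1000000

theorem stmt_1 (p_i p_j p_k : EuclideanSpace ℝ (Fin 3))
    (hij : p_i ≠ p_j) (hik : p_i ≠ p_k) (hjk : p_j ≠ p_k)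
    (w_ik w_ki w_ij w_ji w_jk w_kj : ℝ)
    (hC1 : w_ik * dist p_i p_k * dist p_i p_j * Real.cos (∠ p_j p_i p_k)
          + w_ki * dist p_i p_k * dist p_j p_k * Real.cos (∠ p_i p_k p_j) = 0)
    (hC2 : w_ij * dist p_i p_k * dist p_i p_j * Real.cos (∠ p_j p_i p_k)
          + w_ji * dist p_i p_j * dist p_j p_k * Real.cos (∠ p_i p_j p_k) = 0)
    (hC3 : w_jk * dist p_j p_k * dist p_i p_j * Real.cos (∠ p_i p_j p_k)
          + w_kj * dist p_i p_k * dist p_j p_k * Real.cos (∠ p_i p_k p_j) = 0)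
    (h1 : w_ik ≠ 0) (h2 : w_ki ≠ 0) (h3 : w_ij ≠ 0) (h4 : w_ji ≠ 0)
    (h5 : w_jk ≠ 0) (h6 : w_kj ≠ 0) :
    Collinear ℝ ({p_i, p_j, p_k} : Set (EuclideanSpace ℝ (Fin 3))) ↔
      (w_ki / w_ik + w_ji / w_ij = 1 ∨ w_ij / w_ji + w_kj / w_jk = 1 ∨
        w_ik / w_ki + w_jk / w_kj = 1) := by
  have ha : (0:ℝ) < dist p_j p_k := dist_pos.2 hjk
  have hb : (0:ℝ) < dist p_i p_k := dist_pos.2 hik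
  have hc : (0:ℝ) < dist p_i p_j := dist_pos.2 hij
  set a := dist p_j p_k with ha'
  set b := dist p_i p_k with hb'
  set c := dist p_i p_j with hc'
  set X := c * b * Real.cos (∠ p_j p_i p_k) with hX'
  set Y := c * a * Real.cos (∠ p_i p_j p_k) with hY'
  set Z := b * a * Real.cos (∠ p_i p_k p_j) with hZ'
  have hC1' : w_ik * X + w_ki * Z = 0 := by linear_combination hC1
  have hC2' : w_ij * X + w_ji * Y = 0 := by linear_combination hC2
  have hC3' : w_jk * Y + w_kj * Z = 0 := by linear_combination hC3
  have law1 : a^2 = c^2 + b^2 - 2*X := by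
    have h := EuclideanGeometry.law_cos p_j p_i p_k
    rw [dist_comm p_j p_i, dist_comm p_k p_i] at h
    linear_combination h
  have law2 : b^2 = c^2 + a^2 - 2*Y := by
    have h := EuclideanGeometry.law_cos p_i p_j p_k
    rw [dist_comm p_k p_j] at h
    linear_combination h
  have law3 : c^2 = b^2 + a^2 - 2*Z := by
    have h := EuclideanGeometry.law_cos p_i p_k p_j
    linear_combination h
  have hXY : X + Y = c^2 := by linarith
  have hXZ : X + Z = b^2 := by linarith
  have hYZ : Y + Z = a^2 := by linarith
  have hX : X ≠ 0 := by
    intro h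
    have hZ0 : Z = 0 := by
      have h' := hC1'; rw [h, mul_zero, zero_add] at h'
      exact (mul_eq_zero.1 h').resolve_left h2
    have hY0 : Y = 0 := by
      have h' := hC2'; rw [h, mul_zero, zero_add] at h'
      exact (mul_eq_zero.1 h').resolve_left h4
    have hc2 : c ^ 2 = 0 := by rw [← hXY, h, hY0]; ring
    nlinarith [hc]
  have hY : Y ≠ 0 := by
    intro h
    apply hX
    have h' := hC2'; rw [h, mul_zero, add_zero] at h'
    exact (mul_eq_zero.1 h').resolve_left h3
  have hZ : Z ≠ 0 := by
    intro h
    apply hX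
    have h' := hC1'; rw [h, mul_zero, add_zero] at h'
    exact (mul_eq_zero.1 h').resolve_left h1
  -- collinearity characterization
  have hcol : Collinear ℝ ({p_i, p_j, p_k} : Set (EuclideanSpace ℝ (Fin 3))) ↔
      Real.cos (∠ p_j p_i p_k) = 1 ∨ Real.cos (∠ p_j p_i p_k) = -1 := by
    rw [Set.insert_comm, EuclideanGeometry.collinear_iff_eq_or_eq_or_angle_eq_zero_or_angle_eq_pi]
    constructor
    · rintro (h | h | h | h)
      · exact absurd h.symm hij
      · exact absurd h.symm hik
      · left; rw [h, Real.cos_zero]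
      · right; rw [h, Real.cos_pi]
    · rintro (h | h)
      · refine Or.inr (Or.inr (Or.inl ?_))
        exact Real.injOn_cos
          ⟨EuclideanGeometry.angle_nonneg _ _ _, EuclideanGeometry.angle_le_pi _ _ _⟩
          ⟨le_refl 0, Real.pi_pos.le⟩ (by rw [h, Real.cos_zero])
      · refine Or.inr (Or.inr (Or.inr ?_))
        exact Real.injOn_cos
          ⟨EuclideanGeometry.angle_nonneg _ _ _, EuclideanGeometry.angle_le_pi _ _ _⟩
          ⟨Real.pi_pos.le, le_refl _⟩ (by rw [h, Real.cos_pi])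
  have hmain : Collinear ℝ ({p_i, p_j, p_k} : Set (EuclideanSpace ℝ (Fin 3))) ↔
      X * Y + X * Z + Y * Z = 0 := by
    rw [hcol]
    constructor
    · rintro (h | h) <;>
      · have hx2 : X ^ 2 = (c * b) ^ 2 := by rw [hX', h]; ring
        linear_combination (X + Z) * hXY + c ^ 2 * hXZ - hx2
    · intro h
      have hsq : Real.cos (∠ p_j p_i p_k) ^ 2 = 1 := by
        have hcb : c * b ≠ 0 := mul_ne_zero hc.ne' hb.ne'
        have hx2 : X ^ 2 = (c * b) ^ 2 := by
          linear_combination (X + Z) * hXY + c ^ 2 * hXZ - h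
        rw [hX'] at hx2
        exact mul_left_cancel₀ (pow_ne_zero 2 hcb) (by linear_combination hx2)
      have : (Real.cos (∠ p_j p_i p_k) - 1) * (Real.cos (∠ p_j p_i p_k) + 1) = 0 := by
        nlinarith [hsq]
      rcases mul_eq_zero.1 this with h' | h'
      · left; linarith
      · right; linarith
  -- ratios
  have r1 : w_ki / w_ik = -X / Z := by
    rw [div_eq_div_iff h1 hZ]; linear_combination hC1'
  have r2 : w_ji / w_ij = -X / Y := by
    rw [div_eq_div_iff h3 hY]; linear_combination hC2'
  have r3 : w_ij / w_ji = -Y / X := by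
    rw [div_eq_div_iff h4 hX]; linear_combination hC2'
  have r4 : w_kj / w_jk = -Y / Z := by
    rw [div_eq_div_iff h5 hZ]; linear_combination hC3'
  have r5 : w_ik / w_ki = -Z / X := by
    rw [div_eq_div_iff h2 hX]; linear_combination hC1'
  have r6 : w_jk / w_kj = -Z / Y := by
    rw [div_eq_div_iff h6 hY]; linear_combination hC3'
  rw [hmain, r1, r2, r3, r4, r5, r6]
  have e1 : -X / Z + -X / Y = 1 ↔ X * Y + X * Z + Y * Z = 0 := by
    rw [div_add_div _ _ hZ hY, div_eq_one_iff_eq (mul_ne_zero hZ hY)]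
    constructor <;> intro h <;> linear_combination -h
  have e2 : -Y / X + -Y / Z = 1 ↔ X * Y + X * Z + Y * Z = 0 := by
    rw [div_add_div _ _ hX hZ, div_eq_one_iff_eq (mul_ne_zero hX hZ)]
    constructor <;> intro h <;> linear_combination -h
  have e3 : -Z / X + -Z / Y = 1 ↔ X * Y + X * Z + Y * Z = 0 := by
    rw [div_add_div _ _ hX hY, div_eq_one_iff_eq (mul_ne_zero hX hY)]
    constructor <;> intro h <;> linear_combination -h
  rw [e1, e2, e3]
  tauto
end

section
/- Let p_i, p_j, p_k and q_i, q_j, q_k be two triples of pairwise distinct points in ℝ³, both satisfying the angle constraints (C1)–(C3) with the same parameters w_ik, w_ki, w_ij, w_ji, w_jk, w_kj obeying the nondegeneracy conditions. Then the corresponding angles agree: ∠(p_j, p_i, p_k) = ∠(q_j, q_i, q_k), ∠(p_i, p_j, p_k) = ∠(q_i, q_j, q_k), and ∠(p_i, p_k, p_j) = ∠(q_i, q_k, q_j). In other words, the three angles θ_i, θ_j, θ_k ∈ [0, π] are uniquely determined by the parameters. -/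
open EuclideanGeometry

private lemma crossZero {a b u v u' v' : ℝ} (h1 : a * u + b * v = 0)
    (h2 : a * u' + b * v' = 0) (hab : a ^ 2 + b ^ 2 ≠ 0) : u * v' = u' * v := by
  have hor : a ≠ 0 ∨ b ≠ 0 := by
    by_contra h
    push_neg at h
    exact hab (by rw [h.1, h.2]; ring)
  rcases hor with ha | hb
  · apply mul_left_cancel₀ ha
    linear_combination v' * h1 - v * h2
  · apply mul_left_cancel₀ hb
    linear_combination u * h2 - u' * h1

private lemma tri (w_ik w_ki w_ij w_ji w_jk w_kj x y z x' y' z' : ℝ)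
    (c1 : w_ik * x + w_ki * z = 0) (c2 : w_ij * x + w_ji * y = 0)
    (c3 : w_jk * y + w_kj * z = 0)
    (c1' : w_ik * x' + w_ki * z' = 0) (c2' : w_ij * x' + w_ji * y' = 0)
    (c3' : w_jk * y' + w_kj * z' = 0)
    (hnd1 : w_ik ^ 2 + w_ki ^ 2 ≠ 0) (hnd2 : w_ij ^ 2 + w_ji ^ 2 ≠ 0)
    (hnd3 : w_jk ^ 2 + w_kj ^ 2 ≠ 0)
    (hxy : 0 < x + y) (hxz : 0 < x + z) (hyz : 0 < y + z)
    (hxy' : 0 < x' + y') :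
    ∃ l : ℝ, 0 < l ∧ x' = l * x ∧ y' = l * y ∧ z' = l * z := by
  have cxz : x * z' = x' * z := crossZero c1 c1' hnd1
  have cxy : x * y' = x' * y := crossZero c2 c2' hnd2
  have cyz : y * z' = y' * z := crossZero c3 c3' hnd3
  by_cases hx : x = 0
  · have hy : 0 < y := by linarith
    have hz : 0 < z := by linarith
    have hx' : x' = 0 := by
      have h0 : x' * y = 0 := by rw [← cxy, hx]; ring
      rcases mul_eq_zero.1 h0 with h | h
      · exact h
      · exact absurd h (ne_of_gt hy)
    have hy' : 0 < y' := by rw [hx'] at hxy'; linarith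
    refine ⟨y' / y, div_pos hy' hy, ?_, ?_, ?_⟩
    · rw [hx, hx']; ring
    · field_simp
    · field_simp
      linear_combination cyz
  · have e1 : x' = x' / x * x := by field_simp
    have e2 : y' = x' / x * y := by
      field_simp
      linear_combination cxy
    have e3 : z' = x' / x * z := by
      field_simp
      linear_combination cxz
    have hsum : x' / x * (x + y) = x' + y' := by linear_combination -e1 - e2
    have hl : 0 < x' / x := by
      by_contra hc
      push_neg at hc
      nlinarith
    exact ⟨x' / x, hl, e1, e2, e3⟩

private lemma cos_det {l d1 d2 e1 e2 c c' : ℝ} (hl : 0 < l) (hd1 : 0 < d1) (hd2 : 0 < d2)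
    (he1 : 0 ≤ e1) (he2 : 0 ≤ e2) (h1 : e1 ^ 2 = l * d1 ^ 2) (h2 : e2 ^ 2 = l * d2 ^ 2)
    (hx : e1 * e2 * c' = l * (d1 * d2 * c)) : c' = c := by
  have hee : e1 * e2 = l * (d1 * d2) := by
    have hsq : (e1 * e2) ^ 2 = (l * (d1 * d2)) ^ 2 := by
      have hll : l ^ 2 = l * l := sq l
      calc (e1 * e2) ^ 2 = e1 ^ 2 * e2 ^ 2 := by ring
        _ = (l * (d1 * d2)) ^ 2 := by rw [h1, h2]; ring
    exact (pow_left_inj₀ (mul_nonneg he1 he2) (by positivity) (by norm_num)).1 hsq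
  have hne : l * (d1 * d2) ≠ 0 := by positivity
  apply mul_left_cancel₀ hne
  linear_combination hx - c' * hee

private lemma angle_eq_of_cos_eq {V P : Type*} [NormedAddCommGroup V]
    [InnerProductSpace ℝ V] [MetricSpace P] [NormedAddTorsor V P]
    {a b c d e f : P} (h : Real.cos (∠ a b c) = Real.cos (∠ d e f)) :
    ∠ a b c = ∠ d e f :=
  Real.injOn_cos (Set.mem_Icc.2 ⟨angle_nonneg _ _ _, angle_le_pi _ _ _⟩)
    (Set.mem_Icc.2 ⟨angle_nonneg _ _ _, angle_le_pi _ _ _⟩) h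

theorem stmt_2 (p_i p_j p_k q_i q_j q_k : EuclideanSpace ℝ (Fin 3))
    (hpij : p_i ≠ p_j) (hpik : p_i ≠ p_k) (hpjk : p_j ≠ p_k)
    (hqij : q_i ≠ q_j) (hqik : q_i ≠ q_k) (hqjk : q_j ≠ q_k)
    (w_ik w_ki w_ij w_ji w_jk w_kj : ℝ)
    (hpC1 : w_ik * dist p_i p_k * dist p_i p_j * Real.cos (∠ p_j p_i p_k)
          + w_ki * dist p_i p_k * dist p_j p_k * Real.cos (∠ p_i p_k p_j) = 0)
    (hpC2 : w_ij * dist p_i p_k * dist p_i p_j * Real.cos (∠ p_j p_i p_k)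
          + w_ji * dist p_i p_j * dist p_j p_k * Real.cos (∠ p_i p_j p_k) = 0)
    (hpC3 : w_jk * dist p_j p_k * dist p_i p_j * Real.cos (∠ p_i p_j p_k)
          + w_kj * dist p_i p_k * dist p_j p_k * Real.cos (∠ p_i p_k p_j) = 0)
    (hqC1 : w_ik * dist q_i q_k * dist q_i q_j * Real.cos (∠ q_j q_i q_k)
          + w_ki * dist q_i q_k * dist q_j q_k * Real.cos (∠ q_i q_k q_j) = 0)
    (hqC2 : w_ij * dist q_i q_k * dist q_i q_j * Real.cos (∠ q_j q_i q_k)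
          + w_ji * dist q_i q_j * dist q_j q_k * Real.cos (∠ q_i q_j q_k) = 0)
    (hqC3 : w_jk * dist q_j q_k * dist q_i q_j * Real.cos (∠ q_i q_j q_k)
          + w_kj * dist q_i q_k * dist q_j q_k * Real.cos (∠ q_i q_k q_j) = 0)
    (hnd1 : w_ik ^ 2 + w_ki ^ 2 ≠ 0) (hnd2 : w_ij ^ 2 + w_ji ^ 2 ≠ 0)
    (hnd3 : w_jk ^ 2 + w_kj ^ 2 ≠ 0) :
    ∠ p_j p_i p_k = ∠ q_j q_i q_k ∧ ∠ p_i p_j p_k = ∠ q_i q_j q_k ∧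
      ∠ p_i p_k p_j = ∠ q_i q_k q_j := by
  have dpij : 0 < dist p_i p_j := dist_pos.2 hpij
  have dpik : 0 < dist p_i p_k := dist_pos.2 hpik
  have dpjk : 0 < dist p_j p_k := dist_pos.2 hpjk
  have dqij : 0 < dist q_i q_j := dist_pos.2 hqij
  have dqik : 0 < dist q_i q_k := dist_pos.2 hqik
  have dqjk : 0 < dist q_j q_k := dist_pos.2 hqjk
  -- law-of-cosines identities for p
  have Ap := EuclideanGeometry.law_cos p_j p_i p_k
  have Bp := EuclideanGeometry.law_cos p_i p_j p_k
  have Cp := EuclideanGeometry.law_cos p_i p_k p_j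
  rw [dist_comm p_j p_i, dist_comm p_k p_i] at Ap
  rw [dist_comm p_k p_j] at Bp
  have pxy : dist p_i p_k * dist p_i p_j * Real.cos (∠ p_j p_i p_k)
      + dist p_i p_j * dist p_j p_k * Real.cos (∠ p_i p_j p_k) = dist p_i p_j ^ 2 := by
    linear_combination (Ap + Bp) / 2
  have pxz : dist p_i p_k * dist p_i p_j * Real.cos (∠ p_j p_i p_k)
      + dist p_i p_k * dist p_j p_k * Real.cos (∠ p_i p_k p_j) = dist p_i p_k ^ 2 := by
    linear_combination (Ap + Cp) / 2
  have pyz : dist p_i p_j * dist p_j p_k * Real.cos (∠ p_i p_j p_k)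
      + dist p_i p_k * dist p_j p_k * Real.cos (∠ p_i p_k p_j) = dist p_j p_k ^ 2 := by
    linear_combination (Bp + Cp) / 2
  -- law-of-cosines identities for q
  have Aq := EuclideanGeometry.law_cos q_j q_i q_k
  have Bq := EuclideanGeometry.law_cos q_i q_j q_k
  have Cq := EuclideanGeometry.law_cos q_i q_k q_j
  rw [dist_comm q_j q_i, dist_comm q_k q_i] at Aq
  rw [dist_comm q_k q_j] at Bq
  have qxy : dist q_i q_k * dist q_i q_j * Real.cos (∠ q_j q_i q_k)
      + dist q_i q_j * dist q_j q_k * Real.cos (∠ q_i q_j q_k) = dist q_i q_j ^ 2 := by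
    linear_combination (Aq + Bq) / 2
  have qxz : dist q_i q_k * dist q_i q_j * Real.cos (∠ q_j q_i q_k)
      + dist q_i q_k * dist q_j q_k * Real.cos (∠ q_i q_k q_j) = dist q_i q_k ^ 2 := by
    linear_combination (Aq + Cq) / 2
  have qyz : dist q_i q_j * dist q_j q_k * Real.cos (∠ q_i q_j q_k)
      + dist q_i q_k * dist q_j q_k * Real.cos (∠ q_i q_k q_j) = dist q_j q_k ^ 2 := by
    linear_combination (Bq + Cq) / 2
  obtain ⟨l, hl, ex, ey, ez⟩ :=
    tri w_ik w_ki w_ij w_ji w_jk w_kj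
      (dist p_i p_k * dist p_i p_j * Real.cos (∠ p_j p_i p_k))
      (dist p_i p_j * dist p_j p_k * Real.cos (∠ p_i p_j p_k))
      (dist p_i p_k * dist p_j p_k * Real.cos (∠ p_i p_k p_j))
      (dist q_i q_k * dist q_i q_j * Real.cos (∠ q_j q_i q_k))
      (dist q_i q_j * dist q_j q_k * Real.cos (∠ q_i q_j q_k))
      (dist q_i q_k * dist q_j q_k * Real.cos (∠ q_i q_k q_j))
      (by linear_combination hpC1) (by linear_combination hpC2) (by linear_combination hpC3)
      (by linear_combination hqC1) (by linear_combination hqC2) (by linear_combination hqC3)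
      hnd1 hnd2 hnd3
      (by rw [pxy]; positivity) (by rw [pxz]; positivity) (by rw [pyz]; positivity)
      (by rw [qxy]; positivity)
  have hQij : dist q_i q_j ^ 2 = l * dist p_i p_j ^ 2 := by
    linear_combination -qxy + ex + ey + l * pxy
  have hQik : dist q_i q_k ^ 2 = l * dist p_i p_k ^ 2 := by
    linear_combination -qxz + ex + ez + l * pxz
  have hQjk : dist q_j q_k ^ 2 = l * dist p_j p_k ^ 2 := by
    linear_combination -qyz + ey + ez + l * pyz
  refine ⟨?_, ?_, ?_⟩
  · exact (angle_eq_of_cos_eq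
      (cos_det hl dpik dpij dist_nonneg dist_nonneg hQik hQij ex)).symm
  · exact (angle_eq_of_cos_eq
      (cos_det hl dpij dpjk dist_nonneg dist_nonneg hQij hQjk ey)).symm
  · exact (angle_eq_of_cos_eq
      (cos_det hl dpik dpjk dist_nonneg dist_nonneg hQik hQjk ez)).symm
end

section
/- Let p_i, p_j, p_k be pairwise distinct points in ℝ³ satisfying the angle constraints (C1) and (C2) with w_ik, w_ki, w_ij, w_ji all nonzero. Assume d_ik² + d_jk² − d_ij² ≠ 0 and d_ij² + d_jk² − d_ik² ≠ 0. Then (d_ij² + d_ik² − d_jk²)/(d_ik² + d_jk² − d_ij²) + (d_ij² + d_ik² − d_jk²)/(d_ij² + d_jk² − d_ik²) = −(w_ki/w_ik + w_ji/w_ij). -/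
open EuclideanGeometry

theorem stmt_3 (p_i p_j p_k : EuclideanSpace ℝ (Fin 3))
    (hij : p_i ≠ p_j) (hik : p_i ≠ p_k) (hjk : p_j ≠ p_k)
    (w_ik w_ki w_ij w_ji : ℝ)
    (hC1 : w_ik * dist p_i p_k * dist p_i p_j * Real.cos (∠ p_j p_i p_k)
          + w_ki * dist p_i p_k * dist p_j p_k * Real.cos (∠ p_i p_k p_j) = 0)
    (hC2 : w_ij * dist p_i p_k * dist p_i p_j * Real.cos (∠ p_j p_i p_k)
          + w_ji * dist p_i p_j * dist p_j p_k * Real.cos (∠ p_i p_j p_k) = 0)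
    (h1 : w_ik ≠ 0) (h2 : w_ki ≠ 0) (h3 : w_ij ≠ 0) (h4 : w_ji ≠ 0)
    (hden1 : dist p_i p_k ^ 2 + dist p_j p_k ^ 2 - dist p_i p_j ^ 2 ≠ 0)
    (hden2 : dist p_i p_j ^ 2 + dist p_j p_k ^ 2 - dist p_i p_k ^ 2 ≠ 0) :
    (dist p_i p_j ^ 2 + dist p_i p_k ^ 2 - dist p_j p_k ^ 2) /
        (dist p_i p_k ^ 2 + dist p_j p_k ^ 2 - dist p_i p_j ^ 2)
      + (dist p_i p_j ^ 2 + dist p_i p_k ^ 2 - dist p_j p_k ^ 2) /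
          (dist p_i p_j ^ 2 + dist p_j p_k ^ 2 - dist p_i p_k ^ 2)
      = -(w_ki / w_ik + w_ji / w_ij) := by
  have hi := EuclideanGeometry.law_cos p_j p_i p_k
  have hj := EuclideanGeometry.law_cos p_i p_j p_k
  have hk := EuclideanGeometry.law_cos p_i p_k p_j
  simp only [dist_comm p_j p_i, dist_comm p_k p_i, dist_comm p_k p_j] at hi hj hk
  set a := dist p_i p_j
  set b := dist p_i p_k
  set c := dist p_j p_k
  have e1 : w_ik * (a ^ 2 + b ^ 2 - c ^ 2) + w_ki * (b ^ 2 + c ^ 2 - a ^ 2) = 0 := by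
    linear_combination 2 * hC1 - w_ik * hi - w_ki * hk
  have e2 : w_ij * (a ^ 2 + b ^ 2 - c ^ 2) + w_ji * (a ^ 2 + c ^ 2 - b ^ 2) = 0 := by
    linear_combination 2 * hC2 - w_ij * hi - w_ji * hj
  field_simp
  linear_combination (w_ij * (a ^ 2 + c ^ 2 - b ^ 2)) * e1 + (w_ik * (b ^ 2 + c ^ 2 - a ^ 2)) * e2
end

section
/- Let p_i, p_j, p_k be pairwise distinct points in ℝ³ satisfying the angle constraints (C1) and (C2) with w_ik = 0, w_ki ≠ 0, and w_ij² + w_ji² ≠ 0. Then θ_k = π/2, θ_i + θ_j = π/2, w_ij·w_ji < 0, and θ_i = arctan √(−w_ij/w_ji). -/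
open EuclideanGeometry

/-!
Since `w_ik = 0` and `w_ki ≠ 0`, constraint (C1) forces `cos θ_k = 0`, so the triangle is
right-angled at `p_k`. There `d_ij cos θ_i = d_ik` and `d_ij cos θ_j = d_jk`, which turns (C2)
into `w_ij d_ik² + w_ji d_jk² = 0`. Hence the weights have opposite signs,
`√(-w_ij / w_ji) = d_jk / d_ik = tan θ_i`, and the angle sum gives `θ_i + θ_j = π / 2`.
-/

section WeightedSquares

variable {w₁ w₂ a b : ℝ}

theorem mul_neg_of_mul_sq_add_mul_sq_eq_zero (ha : 0 < a) (hb : 0 < b)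
    (h : w₁ * b ^ 2 + w₂ * a ^ 2 = 0) (hw : w₁ ^ 2 + w₂ ^ 2 ≠ 0) : w₁ * w₂ < 0 := by
  have hw₂ : w₂ ≠ 0 := by
    rintro rfl
    have hw₁ : w₁ = 0 := by simpa [hb.ne'] using h
    simp [hw₁] at hw
  have hprod : w₁ * w₂ * b ^ 2 = -(w₂ ^ 2 * a ^ 2) := by linear_combination w₂ * h
  have : w₁ * w₂ * b ^ 2 < 0 := by rw [hprod]; exact neg_neg_of_pos (by positivity)
  exact neg_of_mul_neg_left this (by positivity)

theorem sqrt_neg_div_eq_div_of_mul_sq_add_mul_sq_eq_zero (ha : 0 ≤ a) (hb : 0 < b)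
    (hw₂ : w₂ ≠ 0) (h : w₁ * b ^ 2 + w₂ * a ^ 2 = 0) : √(-w₁ / w₂) = a / b := by
  rw [show -w₁ / w₂ = (a / b) ^ 2 by
    rw [div_pow, div_eq_div_iff hw₂ (by positivity)]
    linear_combination -h]
  exact Real.sqrt_sq (by positivity)

end WeightedSquares

theorem stmt_6_general (p_i p_j p_k : EuclideanSpace ℝ (Fin 3))
    (hik : p_i ≠ p_k) (hjk : p_j ≠ p_k)
    (w_ik w_ki w_ij w_ji : ℝ)
    (hC1 : w_ik * dist p_i p_k * dist p_i p_j * Real.cos (∠ p_j p_i p_k)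
          + w_ki * dist p_i p_k * dist p_j p_k * Real.cos (∠ p_i p_k p_j) = 0)
    (hC2 : w_ij * dist p_i p_k * dist p_i p_j * Real.cos (∠ p_j p_i p_k)
          + w_ji * dist p_i p_j * dist p_j p_k * Real.cos (∠ p_i p_j p_k) = 0)
    (h0 : w_ik = 0) (h1 : w_ki ≠ 0) (h2 : w_ij ^ 2 + w_ji ^ 2 ≠ 0) :
    ∠ p_i p_k p_j = Real.pi / 2 ∧
      ∠ p_j p_i p_k + ∠ p_i p_j p_k = Real.pi / 2 ∧
      w_ij * w_ji < 0 ∧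
      ∠ p_j p_i p_k = Real.arctan (Real.sqrt (-w_ij / w_ji)) := by
  have hk : ∠ p_i p_k p_j = Real.pi / 2 := by
    rw [← cos_eq_zero_iff_angle_eq_pi_div_two]
    simpa [h0, h1, hik, hjk] using hC1
  have hk' : ∠ p_j p_k p_i = Real.pi / 2 := by rwa [angle_comm]
  have hcos_i : dist p_i p_j * Real.cos (∠ p_j p_i p_k) = dist p_i p_k := by
    simpa [angle_comm, dist_comm, mul_comm] using cos_angle_mul_dist_of_angle_eq_pi_div_two hk'
  have hcos_j : dist p_i p_j * Real.cos (∠ p_i p_j p_k) = dist p_j p_k := by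
    simpa [angle_comm, dist_comm, mul_comm] using cos_angle_mul_dist_of_angle_eq_pi_div_two hk
  have hC2' : w_ij * dist p_i p_k ^ 2 + w_ji * dist p_j p_k ^ 2 = 0 := by
    linear_combination hC2 - w_ij * dist p_i p_k * hcos_i - w_ji * dist p_j p_k * hcos_j
  have hw := mul_neg_of_mul_sq_add_mul_sq_eq_zero (dist_pos.2 hjk) (dist_pos.2 hik) hC2' h2
  refine ⟨hk, ?_, hw, ?_⟩
  · have := angle_add_angle_add_angle_eq_pi p_j hik
    rw [hk', angle_comm p_k p_i p_j] at this
    linarith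
  · rw [sqrt_neg_div_eq_div_of_mul_sq_add_mul_sq_eq_zero dist_nonneg (dist_pos.2 hik)
      (right_ne_zero_of_mul hw.ne) hC2',
      angle_comm, angle_eq_arctan_of_angle_eq_pi_div_two hk' hik]

theorem stmt_6 (p_i p_j p_k : EuclideanSpace ℝ (Fin 3))
    (hij : p_i ≠ p_j) (hik : p_i ≠ p_k) (hjk : p_j ≠ p_k)
    (w_ik w_ki w_ij w_ji : ℝ)
    (hC1 : w_ik * dist p_i p_k * dist p_i p_j * Real.cos (∠ p_j p_i p_k)
          + w_ki * dist p_i p_k * dist p_j p_k * Real.cos (∠ p_i p_k p_j) = 0)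
    (hC2 : w_ij * dist p_i p_k * dist p_i p_j * Real.cos (∠ p_j p_i p_k)
          + w_ji * dist p_i p_j * dist p_j p_k * Real.cos (∠ p_i p_j p_k) = 0)
    (h0 : w_ik = 0) (h1 : w_ki ≠ 0) (h2 : w_ij ^ 2 + w_ji ^ 2 ≠ 0) :
    ∠ p_i p_k p_j = Real.pi / 2 ∧
      ∠ p_j p_i p_k + ∠ p_i p_j p_k = Real.pi / 2 ∧
      w_ij * w_ji < 0 ∧
      ∠ p_j p_i p_k = Real.arctan (Real.sqrt (-w_ij / w_ji)) :=
  stmt_6_general p_i p_j p_k hik hjk w_ik w_ki w_ij w_ji hC1 hC2 h0 h1 h2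
end

section
/- Let p_i, p_j, p_k be pairwise distinct collinear points in ℝ³ satisfying the angle constraint (C3) with w_jk·w_kj < 0. Then θ_i = π and θ_j = θ_k = 0. -/
open EuclideanGeometry

theorem stmt_9 (p_i p_j p_k : EuclideanSpace ℝ (Fin 3))
    (hij : p_i ≠ p_j) (hik : p_i ≠ p_k) (hjk : p_j ≠ p_k)
    (hcol : Collinear ℝ ({p_i, p_j, p_k} : Set (EuclideanSpace ℝ (Fin 3))))
    (w_jk w_kj : ℝ)
    (hC3 : w_jk * dist p_j p_k * dist p_i p_j * Real.cos (∠ p_i p_j p_k)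
          + w_kj * dist p_i p_k * dist p_j p_k * Real.cos (∠ p_i p_k p_j) = 0)
    (hsign : w_jk * w_kj < 0) :
    ∠ p_j p_i p_k = Real.pi ∧ ∠ p_i p_j p_k = 0 ∧ ∠ p_i p_k p_j = 0 := by
  have dij : (0:ℝ) < dist p_i p_j := dist_pos.mpr hij
  have dik : (0:ℝ) < dist p_i p_k := dist_pos.mpr hik
  have djk : (0:ℝ) < dist p_j p_k := dist_pos.mpr hjk
  rcases hcol.wbtw_or_wbtw_or_wbtw with h | h | h
  · -- Wbtw p_i p_j p_k : j between
    exfalso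
    have hs : Sbtw ℝ p_i p_j p_k := ⟨h, Ne.symm hij, hjk⟩
    have h1 : ∠ p_i p_j p_k = Real.pi := hs.angle₁₂₃_eq_pi
    have h2 : ∠ p_i p_k p_j = 0 := by
      have := hs.wbtw.symm.angle₂₁₃_eq_zero_of_ne hjk
      rwa [EuclideanGeometry.angle_comm] at this
    rw [h1, h2, Real.cos_pi, Real.cos_zero] at hC3
    have hE : w_jk * (dist p_j p_k * dist p_i p_j)
        = w_kj * (dist p_i p_k * dist p_j p_k) := by linarith [hC3]; 
    have key : (0:ℝ) ≤ w_jk * w_kj *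
        ((dist p_j p_k * dist p_i p_j) * (dist p_i p_k * dist p_j p_k)) := by
      have h4 : w_jk * w_kj * ((dist p_j p_k * dist p_i p_j) * (dist p_i p_k * dist p_j p_k))
          = (w_jk * (dist p_j p_k * dist p_i p_j)) * (w_kj * (dist p_i p_k * dist p_j p_k)) := by
        ring
      rw [h4, ← hE]
      exact mul_self_nonneg _
    nlinarith [mul_pos (mul_pos djk dij) (mul_pos dik djk)]
  · -- Wbtw p_j p_k p_i : k between
    exfalso
    have hs : Sbtw ℝ p_j p_k p_i := ⟨h, Ne.symm hjk, Ne.symm hik⟩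
    have h1 : ∠ p_i p_k p_j = Real.pi := by
      have := hs.angle₁₂₃_eq_pi
      rwa [EuclideanGeometry.angle_comm] at this
    have h2 : ∠ p_i p_j p_k = 0 := by
      have := hs.wbtw.angle₂₁₃_eq_zero_of_ne (Ne.symm hjk)
      rwa [EuclideanGeometry.angle_comm] at this
    rw [h1, h2, Real.cos_pi, Real.cos_zero] at hC3
    have hE : w_kj * (dist p_i p_k * dist p_j p_k)
        = w_jk * (dist p_j p_k * dist p_i p_j) := by linarith [hC3]
    have key : (0:ℝ) ≤ w_jk * w_kj *
        ((dist p_j p_k * dist p_i p_j) * (dist p_i p_k * dist p_j p_k)) := by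
      have h4 : w_jk * w_kj * ((dist p_j p_k * dist p_i p_j) * (dist p_i p_k * dist p_j p_k))
          = (w_kj * (dist p_i p_k * dist p_j p_k)) * (w_jk * (dist p_j p_k * dist p_i p_j)) := by
        ring
      rw [h4, ← hE]
      exact mul_self_nonneg _
    nlinarith [mul_pos (mul_pos djk dij) (mul_pos dik djk)]
  · -- Wbtw p_k p_i p_j : i between, goal case
    have hs : Sbtw ℝ p_k p_i p_j := ⟨h, hik, hij⟩
    refine ⟨?_, ?_, ?_⟩
    · have := hs.angle₁₂₃_eq_pi
      rwa [EuclideanGeometry.angle_comm] at this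
    · exact hs.wbtw.symm.angle₂₁₃_eq_zero_of_ne hij
    · exact hs.wbtw.angle₂₁₃_eq_zero_of_ne hik
end

section
/- Let p_i, p_j, p_k be pairwise distinct, non-collinear points in ℝ³ satisfying the angle constraints (C1)–(C3) with all six parameters w_ik, w_ki, w_ij, w_ji, w_jk, w_kj nonzero. Then exactly one of the following four sign patterns holds: (a) w_ki·w_ik < 0, w_ji·w_ij < 0, and w_kj·w_jk < 0; (b) w_ki·w_ik > 0, w_ji·w_ij > 0, and w_kj·w_jk < 0; (c) w_ki·w_ik > 0, w_kj·w_jk > 0, and w_ji·w_ij < 0; (d) w_ji·w_ij > 0, w_kj·w_jk > 0, and w_ki·w_ik < 0. -/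
/-!
Each constraint says that two numbers add up to zero, so their product is negative; after
dividing by squares of distances this gives `w_ki * w_ik * (cos θ_i * cos θ_k) < 0` and its two
analogues, as soon as `cos θ_i ≠ 0`. That cosine cannot vanish: by (C1) and (C2) a right angle
at `p_i` would make all three angles right. Multiplying the three inequalities, the cosines
appear squared, so `(w_ki * w_ik) * (w_ji * w_ij) * (w_kj * w_jk) < 0`, and the sign patterns
of three numbers with negative product are exactly (a)–(d).
-/

open EuclideanGeometry

namespace EuclideanGeometry

variable {V P : Type*} [NormedAddCommGroup V] [InnerProductSpace ℝ V] [MetricSpace P]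
  [NormedAddTorsor V P]

theorem cos_angle_ne_zero_of_cos_angle_eq_zero {p₁ p₂ p₃ : P} (h : p₂ ≠ p₁)
    (h₁ : Real.cos (∠ p₁ p₂ p₃) = 0) (h₂ : Real.cos (∠ p₁ p₃ p₂) = 0) :
    Real.cos (∠ p₃ p₁ p₂) ≠ 0 := by
  intro h₃
  have hsum := angle_add_angle_add_angle_eq_pi p₃ h
  rw [angle_comm p₂ p₃ p₁] at hsum
  rw [cos_eq_zero_iff_angle_eq_pi_div_two] at h₁ h₂ h₃
  rw [h₁, h₂, h₃] at hsum
  linarith [Real.pi_pos]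

end EuclideanGeometry

section WeightedSum

variable {x y u v p₁ p₂ q₁ q₂ : ℝ}

theorem eq_zero_of_weighted_sum_eq_zero (h : x * p₁ * p₂ * u + y * q₁ * q₂ * v = 0)
    (hq₁ : 0 < q₁) (hq₂ : 0 < q₂) (hy : y ≠ 0) (hu : u = 0) : v = 0 := by
  subst hu
  simpa [hy, hq₁.ne', hq₂.ne'] using h

theorem mul_mul_neg_of_weighted_sum_eq_zero (h : x * p₁ * p₂ * u + y * q₁ * q₂ * v = 0)
    (hp₁ : 0 < p₁) (hp₂ : 0 < p₂) (hq₁ : 0 < q₁) (hq₂ : 0 < q₂) (hx : x ≠ 0) (hu : u ≠ 0) :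
    y * x * (u * v) < 0 := by
  have hv : y * q₁ * q₂ * v = -(x * p₁ * p₂ * u) := eq_neg_of_add_eq_zero_right h
  have hneg : y * x * (u * v) * (p₁ * p₂ * q₁ * q₂) < 0 :=
    calc y * x * (u * v) * (p₁ * p₂ * q₁ * q₂) = (x * p₁ * p₂ * u) * (y * q₁ * q₂ * v) := by ring
      _ = -(x * p₁ * p₂ * u) ^ 2 := by rw [hv]; ring
      _ < 0 := neg_neg_of_pos (by positivity)
  exact neg_of_mul_neg_left hneg (by positivity)

theorem mul_mul_neg_of_pairwise_mul_neg {X Y Z a b c : ℝ} (hX : X * (a * c) < 0)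
    (hY : Y * (a * b) < 0) (hZ : Z * (b * c) < 0) : X * Y * Z < 0 := by
  have hneg : X * Y * Z * (a * b * c) ^ 2 < 0 :=
    calc X * Y * Z * (a * b * c) ^ 2 = X * (a * c) * (Y * (a * b)) * (Z * (b * c)) := by ring
      _ < 0 := mul_neg_of_pos_of_neg (mul_pos_of_neg_of_neg hX hY) hZ
  exact neg_of_mul_neg_left hneg (sq_nonneg _)

end WeightedSum

theorem sign_patterns_of_mul_neg {X Y Z : ℝ} (h : X * Y * Z < 0) :
    ((X < 0 ∧ Y < 0 ∧ Z < 0) ∧ ¬ (X > 0 ∧ Y > 0 ∧ Z < 0) ∧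
        ¬ (X > 0 ∧ Z > 0 ∧ Y < 0) ∧ ¬ (Y > 0 ∧ Z > 0 ∧ X < 0)) ∨
      (¬ (X < 0 ∧ Y < 0 ∧ Z < 0) ∧ (X > 0 ∧ Y > 0 ∧ Z < 0) ∧
        ¬ (X > 0 ∧ Z > 0 ∧ Y < 0) ∧ ¬ (Y > 0 ∧ Z > 0 ∧ X < 0)) ∨
      (¬ (X < 0 ∧ Y < 0 ∧ Z < 0) ∧ ¬ (X > 0 ∧ Y > 0 ∧ Z < 0) ∧
        (X > 0 ∧ Z > 0 ∧ Y < 0) ∧ ¬ (Y > 0 ∧ Z > 0 ∧ X < 0)) ∨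
      (¬ (X < 0 ∧ Y < 0 ∧ Z < 0) ∧ ¬ (X > 0 ∧ Y > 0 ∧ Z < 0) ∧
        ¬ (X > 0 ∧ Z > 0 ∧ Y < 0) ∧ (Y > 0 ∧ Z > 0 ∧ X < 0)) := by
  rcases lt_or_gt_of_ne (left_ne_zero_of_mul (left_ne_zero_of_mul h.ne)) with hX | hX <;>
    rcases lt_or_gt_of_ne (right_ne_zero_of_mul (left_ne_zero_of_mul h.ne)) with hY | hY
  · have hZ : Z < 0 := neg_of_mul_neg_right h (mul_pos_of_neg_of_neg hX hY).le
    grind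
  · have hZ : 0 < Z := pos_of_mul_neg_right h (mul_neg_of_neg_of_pos hX hY).le
    grind
  · have hZ : 0 < Z := pos_of_mul_neg_right h (mul_neg_of_pos_of_neg hX hY).le
    grind
  · have hZ : Z < 0 := neg_of_mul_neg_right h (mul_pos hX hY).le
    grind

theorem stmt_11_general (p_i p_j p_k : EuclideanSpace ℝ (Fin 3))
    (hij : p_i ≠ p_j) (hik : p_i ≠ p_k) (hjk : p_j ≠ p_k)
    (w_ik w_ki w_ij w_ji w_jk w_kj : ℝ)
    (hC1 : w_ik * dist p_i p_k * dist p_i p_j * Real.cos (∠ p_j p_i p_k)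
          + w_ki * dist p_i p_k * dist p_j p_k * Real.cos (∠ p_i p_k p_j) = 0)
    (hC2 : w_ij * dist p_i p_k * dist p_i p_j * Real.cos (∠ p_j p_i p_k)
          + w_ji * dist p_i p_j * dist p_j p_k * Real.cos (∠ p_i p_j p_k) = 0)
    (hC3 : w_jk * dist p_j p_k * dist p_i p_j * Real.cos (∠ p_i p_j p_k)
          + w_kj * dist p_i p_k * dist p_j p_k * Real.cos (∠ p_i p_k p_j) = 0)
    (h1 : w_ik ≠ 0) (h2 : w_ki ≠ 0) (h3 : w_ij ≠ 0) (h4 : w_ji ≠ 0)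
    (h5 : w_jk ≠ 0) :
    ((w_ki * w_ik < 0 ∧ w_ji * w_ij < 0 ∧ w_kj * w_jk < 0) ∧
        ¬ (w_ki * w_ik > 0 ∧ w_ji * w_ij > 0 ∧ w_kj * w_jk < 0) ∧
        ¬ (w_ki * w_ik > 0 ∧ w_kj * w_jk > 0 ∧ w_ji * w_ij < 0) ∧
        ¬ (w_ji * w_ij > 0 ∧ w_kj * w_jk > 0 ∧ w_ki * w_ik < 0)) ∨
      (¬ (w_ki * w_ik < 0 ∧ w_ji * w_ij < 0 ∧ w_kj * w_jk < 0) ∧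
        (w_ki * w_ik > 0 ∧ w_ji * w_ij > 0 ∧ w_kj * w_jk < 0) ∧
        ¬ (w_ki * w_ik > 0 ∧ w_kj * w_jk > 0 ∧ w_ji * w_ij < 0) ∧
        ¬ (w_ji * w_ij > 0 ∧ w_kj * w_jk > 0 ∧ w_ki * w_ik < 0)) ∨
      (¬ (w_ki * w_ik < 0 ∧ w_ji * w_ij < 0 ∧ w_kj * w_jk < 0) ∧
        ¬ (w_ki * w_ik > 0 ∧ w_ji * w_ij > 0 ∧ w_kj * w_jk < 0) ∧
        (w_ki * w_ik > 0 ∧ w_kj * w_jk > 0 ∧ w_ji * w_ij < 0) ∧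
        ¬ (w_ji * w_ij > 0 ∧ w_kj * w_jk > 0 ∧ w_ki * w_ik < 0)) ∨
      (¬ (w_ki * w_ik < 0 ∧ w_ji * w_ij < 0 ∧ w_kj * w_jk < 0) ∧
        ¬ (w_ki * w_ik > 0 ∧ w_ji * w_ij > 0 ∧ w_kj * w_jk < 0) ∧
        ¬ (w_ki * w_ik > 0 ∧ w_kj * w_jk > 0 ∧ w_ji * w_ij < 0) ∧
        (w_ji * w_ij > 0 ∧ w_kj * w_jk > 0 ∧ w_ki * w_ik < 0)) := by
  have dij : 0 < dist p_i p_j := dist_pos.mpr hij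
  have dik : 0 < dist p_i p_k := dist_pos.mpr hik
  have djk : 0 < dist p_j p_k := dist_pos.mpr hjk
  have hi : Real.cos (∠ p_j p_i p_k) ≠ 0 := fun hi =>
    cos_angle_ne_zero_of_cos_angle_eq_zero hik.symm
      (eq_zero_of_weighted_sum_eq_zero hC1 dik djk h2 hi)
      (eq_zero_of_weighted_sum_eq_zero hC2 dij djk h4 hi) hi
  have hX := mul_mul_neg_of_weighted_sum_eq_zero hC1 dik dij dik djk h1 hi
  have hY := mul_mul_neg_of_weighted_sum_eq_zero hC2 dik dij dij djk h3 hi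
  have hj : Real.cos (∠ p_i p_j p_k) ≠ 0 := right_ne_zero_of_mul (right_ne_zero_of_mul hY.ne)
  have hZ := mul_mul_neg_of_weighted_sum_eq_zero hC3 djk dij dik djk h5 hj
  exact sign_patterns_of_mul_neg (mul_mul_neg_of_pairwise_mul_neg hX hY hZ)

theorem stmt_11 (p_i p_j p_k : EuclideanSpace ℝ (Fin 3))
    (hij : p_i ≠ p_j) (hik : p_i ≠ p_k) (hjk : p_j ≠ p_k)
    (hncol : ¬ Collinear ℝ ({p_i, p_j, p_k} : Set (EuclideanSpace ℝ (Fin 3))))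
    (w_ik w_ki w_ij w_ji w_jk w_kj : ℝ)
    (hC1 : w_ik * dist p_i p_k * dist p_i p_j * Real.cos (∠ p_j p_i p_k)
          + w_ki * dist p_i p_k * dist p_j p_k * Real.cos (∠ p_i p_k p_j) = 0)
    (hC2 : w_ij * dist p_i p_k * dist p_i p_j * Real.cos (∠ p_j p_i p_k)
          + w_ji * dist p_i p_j * dist p_j p_k * Real.cos (∠ p_i p_j p_k) = 0)
    (hC3 : w_jk * dist p_j p_k * dist p_i p_j * Real.cos (∠ p_i p_j p_k)
          + w_kj * dist p_i p_k * dist p_j p_k * Real.cos (∠ p_i p_k p_j) = 0)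
    (h1 : w_ik ≠ 0) (h2 : w_ki ≠ 0) (h3 : w_ij ≠ 0) (h4 : w_ji ≠ 0)
    (h5 : w_jk ≠ 0) (h6 : w_kj ≠ 0) :
    ((w_ki * w_ik < 0 ∧ w_ji * w_ij < 0 ∧ w_kj * w_jk < 0) ∧
        ¬ (w_ki * w_ik > 0 ∧ w_ji * w_ij > 0 ∧ w_kj * w_jk < 0) ∧
        ¬ (w_ki * w_ik > 0 ∧ w_kj * w_jk > 0 ∧ w_ji * w_ij < 0) ∧
        ¬ (w_ji * w_ij > 0 ∧ w_kj * w_jk > 0 ∧ w_ki * w_ik < 0)) ∨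
      (¬ (w_ki * w_ik < 0 ∧ w_ji * w_ij < 0 ∧ w_kj * w_jk < 0) ∧
        (w_ki * w_ik > 0 ∧ w_ji * w_ij > 0 ∧ w_kj * w_jk < 0) ∧
        ¬ (w_ki * w_ik > 0 ∧ w_kj * w_jk > 0 ∧ w_ji * w_ij < 0) ∧
        ¬ (w_ji * w_ij > 0 ∧ w_kj * w_jk > 0 ∧ w_ki * w_ik < 0)) ∨
      (¬ (w_ki * w_ik < 0 ∧ w_ji * w_ij < 0 ∧ w_kj * w_jk < 0) ∧
        ¬ (w_ki * w_ik > 0 ∧ w_ji * w_ij > 0 ∧ w_kj * w_jk < 0) ∧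
        (w_ki * w_ik > 0 ∧ w_kj * w_jk > 0 ∧ w_ji * w_ij < 0) ∧
        ¬ (w_ji * w_ij > 0 ∧ w_kj * w_jk > 0 ∧ w_ki * w_ik < 0)) ∨
      (¬ (w_ki * w_ik < 0 ∧ w_ji * w_ij < 0 ∧ w_kj * w_jk < 0) ∧
        ¬ (w_ki * w_ik > 0 ∧ w_ji * w_ij > 0 ∧ w_kj * w_jk < 0) ∧
        ¬ (w_ki * w_ik > 0 ∧ w_kj * w_jk > 0 ∧ w_ji * w_ij < 0) ∧
        (w_ji * w_ij > 0 ∧ w_kj * w_jk > 0 ∧ w_ki * w_ik < 0)) :=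
  stmt_11_general p_i p_j p_k hij hik hjk w_ik w_ki w_ij w_ji w_jk w_kj hC1 hC2 hC3 h1 h2 h3 h4 h5
end

section
/- Let p_i, p_j, p_k ∈ ℝ³, let w_ik, w_ki ∈ ℝ, and let A be a linear map on ℝ³ that is skew-adjoint, i.e. ⟨A x, y⟩ = −⟨x, A y⟩ for all x, y. Then ⟨w_ik·(2p_i − p_j − p_k) + w_ki·(p_j − p_k), A p_i⟩ + (w_ik − w_ki)·⟨p_k − p_i, A p_j⟩ + ⟨w_ik·(p_j − p_i) + w_ki·(2p_k − p_i − p_j), A p_k⟩ = 0. -/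
open scoped RealInnerProductSpace

theorem stmt_13 (p_i p_j p_k : EuclideanSpace ℝ (Fin 3)) (w_ik w_ki : ℝ)
    (A : EuclideanSpace ℝ (Fin 3) →ₗ[ℝ] EuclideanSpace ℝ (Fin 3))
    (hA : ∀ x y : EuclideanSpace ℝ (Fin 3), ⟪A x, y⟫ = -⟪x, A y⟫) :
    ⟪w_ik • (2 • p_i - p_j - p_k) + w_ki • (p_j - p_k), A p_i⟫
      + (w_ik - w_ki) * ⟪p_k - p_i, A p_j⟫
      + ⟪w_ik • (p_j - p_i) + w_ki • (2 • p_k - p_i - p_j), A p_k⟫ = 0 := by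
  have key : ∀ x y : EuclideanSpace ℝ (Fin 3), ⟪x, A y⟫ = -⟪y, A x⟫ := fun x y => by
    rw [real_inner_comm, hA]
  have hii := key p_i p_i
  have hjj := key p_j p_j
  have hkk := key p_k p_k
  have hij := key p_i p_j
  have hik := key p_i p_k
  have hjk := key p_j p_k
  simp only [inner_add_left, inner_sub_left, inner_smul_left, two_smul,
    RCLike.ofReal_real_eq_id, id_eq, conj_trivial]
  linear_combination w_ik * hii + w_ki * hkk + (w_ki - w_ik) * hij - (w_ik + w_ki) * hik + (w_ik - w_ki) * hjk
end

section
/- Let p_i, p_j, p_k, p_h, p_l ∈ ℝ³ with p_j, p_k, p_h, p_l each distinct from p_i, and suppose p_l is not collinear with {p_i, p_j}, not collinear with {p_i, p_k}, and not collinear with {p_i, p_h}. Let μ̄_ij, μ̄_ik, μ̄_ih, μ̄_il ∈ ℝ satisfy the bearing constraint μ̄_ij·g_ij + μ̄_ik·g_ik + μ̄_ih·g_ih + μ̄_il·g_il = 0, where g_im = (p_m − p_i)/dist(p_i, p_m). Define μ_ij = μ̄_ij·sin∠(p_i, p_j, p_l)/sin∠(p_i, p_l, p_j), μ_ik = μ̄_ik·sin∠(p_i,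 p_k, p_l)/sin∠(p_i, p_l, p_k), μ_ih = μ̄_ih·sin∠(p_i, p_h, p_l)/sin∠(p_i, p_l, p_h), and μ_il = μ̄_il. Then μ_ij·(p_j − p_i) + μ_ik·(p_k − p_i) + μ_ih·(p_h − p_i) + μ_il·(p_l − p_i) = 0. -/
/-!
By the law of sines in the triangle `p_i p_m p_l`, the factor
`sin ∠(p_i, p_m, p_l) / sin ∠(p_i, p_l, p_m)` equals `dist p_i p_l / dist p_i p_m`, so the
displacement constraint is the bearing constraint multiplied by `dist p_i p_l`.
-/

open EuclideanGeometry

section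

variable {V P : Type*} [NormedAddCommGroup V] [InnerProductSpace ℝ V] [MetricSpace P]
  [NormedAddTorsor V P]

theorem sin_angle_div_sin_angle_eq_dist_div_dist {a b c : P}
    (h : ¬Collinear ℝ ({a, b, c} : Set P)) :
    Real.sin (∠ a b c) / Real.sin (∠ a c b) = dist a c / dist a b := by
  have hsin : Real.sin (∠ a c b) ≠ 0 := by
    refine (sin_pos_of_not_collinear ?_).ne'
    rwa [Set.pair_comm]
  have hab : dist a b ≠ 0 := dist_ne_zero.2 (ne₁₂_of_not_collinear h)
  rw [div_eq_div_iff hsin hab, angle_comm, dist_comm a b, law_sin c b a, mul_comm]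

end

theorem stmt_17_general (p_i p_j p_k p_h p_l : EuclideanSpace ℝ (Fin 3))
    (hlj : ¬ Collinear ℝ ({p_i, p_j, p_l} : Set (EuclideanSpace ℝ (Fin 3))))
    (hlk : ¬ Collinear ℝ ({p_i, p_k, p_l} : Set (EuclideanSpace ℝ (Fin 3))))
    (hlh : ¬ Collinear ℝ ({p_i, p_h, p_l} : Set (EuclideanSpace ℝ (Fin 3))))
    (μb_ij μb_ik μb_ih μb_il : ℝ)
    (hbear : μb_ij • ((dist p_i p_j)⁻¹ • (p_j - p_i))
        + μb_ik • ((dist p_i p_k)⁻¹ • (p_k - p_i))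
        + μb_ih • ((dist p_i p_h)⁻¹ • (p_h - p_i))
        + μb_il • ((dist p_i p_l)⁻¹ • (p_l - p_i)) = 0) :
    (μb_ij * (Real.sin (∠ p_i p_j p_l) / Real.sin (∠ p_i p_l p_j))) • (p_j - p_i)
      + (μb_ik * (Real.sin (∠ p_i p_k p_l) / Real.sin (∠ p_i p_l p_k))) • (p_k - p_i)
      + (μb_ih * (Real.sin (∠ p_i p_h p_l) / Real.sin (∠ p_i p_l p_h))) • (p_h - p_i)
      + μb_il • (p_l - p_i) = 0 := by
  have hdl : dist p_i p_l ≠ 0 := dist_ne_zero.2 (ne₁₃_of_not_collinear hlj)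
  rw [sin_angle_div_sin_angle_eq_dist_div_dist hlj, sin_angle_div_sin_angle_eq_dist_div_dist hlk,
    sin_angle_div_sin_angle_eq_dist_div_dist hlh]
  linear_combination (norm := match_scalars) dist p_i p_l • hbear
  all_goals simp [field]

theorem stmt_17 (p_i p_j p_k p_h p_l : EuclideanSpace ℝ (Fin 3))
    (hj : p_j ≠ p_i) (hk : p_k ≠ p_i) (hh : p_h ≠ p_i) (hl : p_l ≠ p_i)
    (hlj : ¬ Collinear ℝ ({p_i, p_j, p_l} : Set (EuclideanSpace ℝ (Fin 3))))
    (hlk : ¬ Collinear ℝ ({p_i, p_k, p_l} : Set (EuclideanSpace ℝ (Fin 3))))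
    (hlh : ¬ Collinear ℝ ({p_i, p_h, p_l} : Set (EuclideanSpace ℝ (Fin 3))))
    (μb_ij μb_ik μb_ih μb_il : ℝ)
    (hbear : μb_ij • ((dist p_i p_j)⁻¹ • (p_j - p_i))
        + μb_ik • ((dist p_i p_k)⁻¹ • (p_k - p_i))
        + μb_ih • ((dist p_i p_h)⁻¹ • (p_h - p_i))
        + μb_il • ((dist p_i p_l)⁻¹ • (p_l - p_i)) = 0) :
    (μb_ij * (Real.sin (∠ p_i p_j p_l) / Real.sin (∠ p_i p_l p_j))) • (p_j - p_i)
      + (μb_ik * (Real.sin (∠ p_i p_k p_l) / Real.sin (∠ p_i p_l p_k))) • (p_k - p_i)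
      + (μb_ih * (Real.sin (∠ p_i p_h p_l) / Real.sin (∠ p_i p_l p_h))) • (p_h - p_i)
      + μb_il • (p_l - p_i) = 0 :=
  stmt_17_general p_i p_j p_k p_h p_l hlj hlk hlh μb_ij μb_ik μb_ih μb_il hbear
end

section
/- Let p_i, p_j, p_k be pairwise distinct points in ℝ³ satisfying the angle constraints (C1) and (C2) with w_ik, w_ki, w_ij, w_ji all nonzero, and suppose dist(p_j, p_k) = dist(p_i, p_j) + dist(p_i, p_k) (i.e., the points are collinear with p_i strictly between p_j and p_k, so θ_i = π). Then w_ki/w_ik + w_ji/w_ij = 1. -/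
open EuclideanGeometry

theorem stmt_18 (p_i p_j p_k : EuclideanSpace ℝ (Fin 3))
    (hij : p_i ≠ p_j) (hik : p_i ≠ p_k) (hjk : p_j ≠ p_k)
    (w_ik w_ki w_ij w_ji : ℝ)
    (hC1 : w_ik * dist p_i p_k * dist p_i p_j * Real.cos (∠ p_j p_i p_k)
          + w_ki * dist p_i p_k * dist p_j p_k * Real.cos (∠ p_i p_k p_j) = 0)
    (hC2 : w_ij * dist p_i p_k * dist p_i p_j * Real.cos (∠ p_j p_i p_k)
          + w_ji * dist p_i p_j * dist p_j p_k * Real.cos (∠ p_i p_j p_k) = 0)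
    (h1 : w_ik ≠ 0) (h2 : w_ki ≠ 0) (h3 : w_ij ≠ 0) (h4 : w_ji ≠ 0)
    (hbetween : dist p_j p_k = dist p_i p_j + dist p_i p_k) :
    w_ki / w_ik + w_ji / w_ij = 1 := by
  have hw : Wbtw ℝ p_j p_i p_k := by
    rw [← dist_add_dist_eq_iff, dist_comm p_j p_i, hbetween]
  have hs : Sbtw ℝ p_j p_i p_k := ⟨hw, hij, hik⟩
  have hpi : ∠ p_j p_i p_k = Real.pi := hs.angle₁₂₃_eq_pi
  have hk0 : ∠ p_i p_k p_j = 0 := angle_eq_zero_of_angle_eq_pi_right hpi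
  have hj0 : ∠ p_i p_j p_k = 0 := angle_eq_zero_of_angle_eq_pi_left hpi
  rw [hpi, Real.cos_pi] at hC1 hC2
  rw [hk0, Real.cos_zero] at hC1
  rw [hj0, Real.cos_zero] at hC2
  have dik : dist p_i p_k ≠ 0 := dist_ne_zero.2 hik
  have dij : dist p_i p_j ≠ 0 := dist_ne_zero.2 hij
  have djk : dist p_j p_k ≠ 0 := dist_ne_zero.2 hjk
  have e1 : w_ki * dist p_j p_k = w_ik * dist p_i p_j := by
    apply mul_right_cancel₀ dik; linear_combination hC1
  have e2 : w_ji * dist p_j p_k = w_ij * dist p_i p_k := by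
    apply mul_right_cancel₀ dij; linear_combination hC2
  have key : (w_ki * w_ij + w_ji * w_ik) * dist p_j p_k = (w_ik * w_ij) * dist p_j p_k := by
    linear_combination w_ij * e1 + w_ik * e2 - w_ik * w_ij * hbetween
  have key2 := mul_right_cancel₀ djk key
  field_simp
  linarith [key2]
end
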